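/- Let C₁ and C₂ be two vertex-disjoint cycles in a graph G with |C₂| ≥ 6. If C₂ contains two vertices u, v with at least 5 and at least 3 neighbors on C₁ respectively, then G[V(C₁) ∪ V(C₂)] contains two vertex-disjoint cycles C₁′, C₂′ with |C₁′| + |C₂′| < |C₁| + |C₂|. -/

import Mathlib

/-!
Fix three neighbours of `w` on `C₁`; since `u` has five, it has two others, `p` and `q`. These
split `C₁` into two arcs, and two of the three neighbours of `w`, say `y` and `y'`, lie inside
the same arc. Closing the other arc through `u`, and the segment of the first arc between `y`
and `y'` through `w`, gives two disjoint cycles of total length at most `|C₁| + 2`, which is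
less than `|C₁| + |C₂|` because a cycle has length at least 3.
-/

theorem Set.exists_ne_two_lt_ncard_diff {α : Type*} {S T : Set α} (hS : 5 ≤ S.ncard)
    (hT : 3 ≤ T.ncard) : ∃ p ∈ S, ∃ q ∈ S, p ≠ q ∧ 2 < (T \ {p, q}).ncard := by
  have hTfin := Set.finite_of_ncard_pos (s := T) (by omega)
  obtain ⟨a, b, c, ha, hb, hc, hab, hac, hbc⟩ := (Set.two_lt_ncard_iff hTfin).1 (by omega)
  have habc : ({a, b, c} : Set α).ncard = 3 := Set.ncard_eq_three.2 ⟨a, b, c, hab, hac, hbc, rfl⟩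
  have hS' : 1 < (S \ {a, b, c}).ncard := by
    have := Set.ncard_le_ncard_sdiff_add_ncard S {a, b, c}
    omega
  obtain ⟨p, q, ⟨hpS, hp⟩, ⟨hqS, hq⟩, hpq⟩ :=
    (Set.one_lt_ncard_iff (Set.finite_of_ncard_pos (by omega))).1 hS'
  refine ⟨p, hpS, q, hqS, hpq, ?_⟩
  have hsub : ({a, b, c} : Set α) ⊆ T \ {p, q} := by
    simp only [Set.mem_insert_iff, Set.mem_singleton_iff, not_or] at hp hq
    rintro x (rfl | rfl | rfl) <;> simp_all [eq_comm]
  have := Set.ncard_le_ncard hsub hTfin.sdiff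
  omega

theorem Set.exists_ne_iff_of_two_lt_ncard {α : Type*} {T : Set α} (hT : 2 < T.ncard)
    (P : α → Prop) : ∃ y ∈ T, ∃ y' ∈ T, y ≠ y' ∧ (P y ↔ P y') := by
  obtain ⟨a, b, c, ha, hb, hc, hab, hac, hbc⟩ :=
    (Set.two_lt_ncard_iff (Set.finite_of_ncard_pos (by omega))).1 hT
  by_cases hPab : P a ↔ P b
  · exact ⟨a, ha, b, hb, hab, hPab⟩
  by_cases hPac : P a ↔ P c
  · exact ⟨a, ha, c, hc, hac, hPac⟩
  exact ⟨b, hb, c, hc, hbc, by tauto⟩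

namespace SimpleGraph

variable {V : Type*} {G : SimpleGraph V}

def HasDisjointCyclesIn (G : SimpleGraph V) (s : Set V) (n : ℕ) : Prop :=
  ∃ (a b : V) (C : G.Walk a a) (D : G.Walk b b), C.IsCycle ∧ D.IsCycle ∧
    (∀ x ∈ C.support, x ∉ D.support) ∧ (∀ x ∈ C.support, x ∈ s) ∧ (∀ x ∈ D.support, x ∈ s) ∧
    C.length + D.length ≤ n

namespace Walk

variable {a b u v w x y y' : V}

theorem IsCycle.induce {s : Set V} {C : G.Walk a a} (hC : C.IsCycle) (hs : ∀ x ∈ C.support, x ∈ s) :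
    (C.induce s hs).IsCycle := by
  rwa [← isCycle_map_iff_of_injective (f := (Embedding.induce (G := G) s).toHom)
    (Embedding.induce (G := G) s).injective, map_induce]

theorem length_induce {s : Set V} (p : G.Walk a b) (hs : ∀ x ∈ p.support, x ∈ s) :
    (p.induce s hs).length = p.length := by
  have := congrArg length (map_induce p hs)
  rwa [length_map] at this

theorem isCycle_cons_concat {P : G.Walk a b} (hP : P.IsPath) (hx : x ∉ P.support) (hab : a ≠ b)
    (hxa : G.Adj x a) (hbx : G.Adj b x) : (cons hxa (P.concat hbx)).IsCycle := by
  refine (cons_isCycle_iff _ _).2 ⟨hP.concat hx hbx, fun h => ?_⟩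
  rw [edges_concat, List.concat_eq_append, List.mem_append, List.mem_singleton] at h
  rcases h with h | h
  · exact hx (P.fst_mem_support_of_mem_edges h)
  · simp only [Sym2.eq_iff, true_and] at h
    grind

theorem mem_support_cons_concat {P : G.Walk a b} (hxa : G.Adj x a) (hbx : G.Adj b x) :
    y ∈ (cons hxa (P.concat hbx)).support ↔ y = x ∨ y ∈ P.support := by
  simp only [support_cons, support_concat, List.mem_cons, List.mem_append]
  tauto

variable [DecidableEq V]

theorem IsPath.start_notMem_support_dropUntil {p : G.Walk u v} (hp : p.IsPath)
    (hw : w ∈ p.support) (h : u ≠ w) : u ∉ (p.dropUntil w hw).support := by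
  intro hu
  have hnd := hp.support_nodup
  rw [← p.take_spec hw, support_append] at hnd
  rw [← cons_tail_support, List.mem_cons] at hu
  exact List.disjoint_of_nodup_append hnd (start_mem_support _) (hu.resolve_left h)

theorem mem_support_dropUntil_of_idxOf_le (p : G.Walk u v) (hy : y ∈ p.support)
    (hy' : y' ∈ p.support) (h : p.support.idxOf y ≤ p.support.idxOf y') :
    y' ∈ (p.dropUntil y hy).support := by
  rw [dropUntil_eq_drop, support_copy, drop_support_eq_support_drop_min, List.mem_drop_iff_getElem]
  have := List.idxOf_lt_length_iff.2 hy'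
  refine ⟨p.support.idxOf y' - min (p.support.idxOf y) p.length, by omega, ?_⟩
  simp [Nat.add_sub_cancel' ((min_le_left _ _).trans h)]

theorem IsPath.exists_isCycle_of_adj_of_inner {X : G.Walk a b} (hX : X.IsPath)
    (hw : w ∉ X.support) (hy : y ∈ X.support) (hy' : y' ∈ X.support) (hyy' : y ≠ y')
    (hya : y ≠ a) (hyb : y ≠ b) (hy'a : y' ≠ a) (hy'b : y' ≠ b) (hwy : G.Adj w y)
    (hwy' : G.Adj w y') :
    ∃ C : G.Walk w w, C.IsCycle ∧ C.length ≤ X.length ∧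
      ∀ x ∈ C.support, x = w ∨ x ∈ X.support ∧ x ≠ a ∧ x ≠ b := by
  wlog hle : X.support.idxOf y ≤ X.support.idxOf y' generalizing y y'
  · exact this hy' hy hyy'.symm hy'a hy'b hya hyb hwy' hwy (by omega)
  have hy'Z := X.mem_support_dropUntil_of_idxOf_le hy hy' hle
  set Z := X.dropUntil y hy
  set S := Z.takeUntil y' hy'Z
  have hZ : Z.IsPath := hX.dropUntil hy
  have hSZ : S.support ⊆ Z.support := Z.support_takeUntil_subset_support hy'Z
  have hZX : Z.support ⊆ X.support := X.support_dropUntil_subset_support hy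
  refine ⟨cons hwy (S.concat hwy'.symm),
    isCycle_cons_concat (hZ.takeUntil hy'Z) (fun h => hw (hZX (hSZ h))) hyy' _ _, ?_, ?_⟩
  · have h₁ : S.length < Z.length := Z.length_takeUntil_lt_length hy'Z hy'b
    have h₂ : Z.length < X.length := X.length_dropUntil_lt_length hy hya
    simp only [length_cons, length_concat]
    omega
  · intro x hx
    rcases (mem_support_cons_concat _ _).1 hx with rfl | hx
    · exact Or.inl rfl
    · refine Or.inr ⟨hZX (hSZ hx), ?_, ?_⟩
      · rintro rfl
        exact hX.start_notMem_support_dropUntil hy hya.symm (hSZ hx)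
      · rintro rfl
        exact endpoint_notMem_support_takeUntil hZ hy'Z hy'b.symm hx

theorem IsCycle.isPath_dropUntil {c : G.Walk v v} (hc : c.IsCycle) (hw : w ∈ c.support)
    (h : v ≠ w) : (c.dropUntil w hw).IsPath := by
  rw [← c.take_spec hw] at hc
  exact hc.isPath_of_append_right (by simpa using h)

theorem IsCycle.eq_or_eq_of_mem_takeUntil_of_mem_dropUntil {c : G.Walk v v} (hc : c.IsCycle)
    (hw : w ∈ c.support) (h₁ : x ∈ (c.takeUntil w hw).support)
    (h₂ : x ∈ (c.dropUntil w hw).support) : x = v ∨ x = w := by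
  by_contra! hx
  have hnd := hc.support_nodup
  rw [← c.take_spec hw, tail_support_append] at hnd
  rw [← cons_tail_support, List.mem_cons] at h₁ h₂
  exact List.disjoint_of_nodup_append hnd (h₁.resolve_left hx.1) (h₂.resolve_left hx.2)

theorem exists_disjoint_cycles_of_paths {p q : V} {s : Set V} {X Y : G.Walk p q}
    (hX : X.IsPath) (hY : Y.IsPath) (hXY : ∀ x ∈ X.support, x ∈ Y.support → x = p ∨ x = q)
    (hpq : p ≠ q) (huw : u ≠ w) (huX : u ∉ X.support) (huY : u ∉ Y.support)
    (hwX : w ∉ X.support) (hwY : w ∉ Y.support) (hup : G.Adj u p) (huq : G.Adj u q)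
    (hy : y ∈ X.support) (hy' : y' ∈ X.support) (hyy' : y ≠ y') (hyp : y ≠ p) (hyq : y ≠ q)
    (hy'p : y' ≠ p) (hy'q : y' ≠ q) (hwy : G.Adj w y) (hwy' : G.Adj w y')
    (hus : u ∈ s) (hws : w ∈ s) (hXs : ∀ x ∈ X.support, x ∈ s) (hYs : ∀ x ∈ Y.support, x ∈ s) :
    G.HasDisjointCyclesIn s (X.length + Y.length + 2) := by
  obtain ⟨D, hD, hDlen, hDX⟩ :=
    hX.exists_isCycle_of_adj_of_inner hwX hy hy' hyy' hyp hyq hy'p hy'q hwy hwy'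
  refine ⟨u, w, cons hup (Y.concat huq.symm), D, isCycle_cons_concat hY huY hpq _ _, hD,
    fun x hxC hxD => ?_, fun x hx => ?_, fun x hx => ?_, ?_⟩
  · rcases (mem_support_cons_concat _ _).1 hxC with rfl | hxY <;>
      rcases hDX x hxD with rfl | ⟨hxX, hxp, hxq⟩
    · exact huw rfl
    · exact huX hxX
    · exact hwY hxY
    · exact (hXY x hxX hxY).elim hxp hxq
  · rcases (mem_support_cons_concat _ _).1 hx with rfl | hx
    exacts [hus, hYs x hx]
  · rcases hDX x hx with rfl | ⟨hx, -⟩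
    exacts [hws, hXs x hx]
  · simp only [length_cons, length_concat]
    omega

theorem IsCycle.hasDisjointCyclesIn {c : G.Walk v v} (hc : c.IsCycle) {s : Set V} {p q : V}
    (hp : p ∈ c.support) (hq : q ∈ c.support) (hpq : p ≠ q) (hu : u ∉ c.support)
    (hw : w ∉ c.support) (huw : u ≠ w) (hup : G.Adj u p) (huq : G.Adj u q)
    (hw3 : 2 < ({y | y ∈ c.support ∧ G.Adj w y} \ {p, q}).ncard) (hus : u ∈ s) (hws : w ∈ s)
    (hcs : ∀ x ∈ c.support, x ∈ s) : G.HasDisjointCyclesIn s (c.length + 2) := by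
  have hR := hc.rotate hp
  set R := c.rotate p hp
  have hRc (x : V) : x ∈ R.support ↔ x ∈ c.support := mem_support_rotate_iff ..
  have hqR : q ∈ R.support := (hRc q).2 hq
  set A := R.takeUntil q hqR
  set B := (R.dropUntil q hqR).reverse
  have hA : A.IsPath := hR.isPath_takeUntil hqR
  have hB : B.IsPath := (hR.isPath_dropUntil hqR hpq).reverse
  have hlen : A.length + B.length = c.length := by
    rw [length_reverse, ← length_append, take_spec, length_rotate]
  have hAc : ∀ x ∈ A.support, x ∈ c.support :=
    fun x hx => (hRc x).1 (R.support_takeUntil_subset_support hqR hx)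
  have hBc : ∀ x ∈ B.support, x ∈ c.support := fun x hx =>
    (hRc x).1 (R.support_dropUntil_subset_support hqR (by simpa [B] using hx))
  have hAB : ∀ x ∈ A.support, x ∈ B.support → x = p ∨ x = q := fun x hxA hxB =>
    hR.eq_or_eq_of_mem_takeUntil_of_mem_dropUntil hqR hxA (by simpa [B] using hxB)
  have hcAB : ∀ x ∈ c.support, x ∈ A.support ∨ x ∈ B.support := by
    intro x hx
    rw [← hRc, ← R.take_spec hqR, mem_support_append_iff] at hx
    simpa [B] using hx
  obtain ⟨y, hy, y', hy', hyy', hiff⟩ := Set.exists_ne_iff_of_two_lt_ncard hw3 (· ∈ A.support)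
  simp only [Set.mem_sdiff, Set.mem_ofPred_eq, Set.mem_insert_iff, Set.mem_singleton_iff,
    not_or] at hy hy'
  by_cases hyA : y ∈ A.support
  · have := exists_disjoint_cycles_of_paths hA hB hAB hpq huw (fun h => hu (hAc u h))
      (fun h => hu (hBc u h)) (fun h => hw (hAc w h)) (fun h => hw (hBc w h)) hup huq hyA
      (hiff.1 hyA) hyy' hy.2.1 hy.2.2 hy'.2.1 hy'.2.2 hy.1.2 hy'.1.2 hus hws
      (fun x hx => hcs x (hAc x hx)) (fun x hx => hcs x (hBc x hx))
    rwa [hlen] at this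
  · have hyB := (hcAB y hy.1.1).resolve_left hyA
    have hy'B := (hcAB y' hy'.1.1).resolve_left (mt hiff.2 hyA)
    have := exists_disjoint_cycles_of_paths hB hA (fun x hxB hxA => hAB x hxA hxB) hpq huw
      (fun h => hu (hBc u h)) (fun h => hu (hAc u h)) (fun h => hw (hBc w h))
      (fun h => hw (hAc w h)) hup huq hyB hy'B hyy' hy.2.1 hy.2.2 hy'.2.1 hy'.2.2 hy.1.2 hy'.1.2
      hus hws (fun x hx => hcs x (hBc x hx)) (fun x hx => hcs x (hAc x hx))
    rwa [add_comm B.length, hlen] at this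

end Walk

theorem HasDisjointCyclesIn.exists_induce {s : Set V} {n m : ℕ} (h : G.HasDisjointCyclesIn s n)
    (hnm : n < m) :
    ∃ (a b : s) (d₁ : (G.induce s).Walk a a) (d₂ : (G.induce s).Walk b b),
      d₁.IsCycle ∧ d₂.IsCycle ∧ (∀ u, u ∈ d₁.support → u ∉ d₂.support) ∧
      d₁.length + d₂.length < m := by
  obtain ⟨a, b, C, D, hC, hD, hCD, hCs, hDs, hlen⟩ := h
  refine ⟨_, _, C.induce s hCs, D.induce s hDs, hC.induce hCs, hD.induce hDs,
    fun x hxC hxD => ?_, ?_⟩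
  · simp only [Walk.support_induce, List.mem_attachWith] at hxC hxD
    exact hCD x hxC hxD
  · rw [Walk.length_induce, Walk.length_induce]
    omega

end SimpleGraph

open SimpleGraph

theorem shorter_two_cycles_14_general {V : Type*}
    (G : SimpleGraph V)
    (v₁ v₂ : V) (c₁ : G.Walk v₁ v₁) (c₂ : G.Walk v₂ v₂)
    (hc₁ : c₁.IsCycle) (hc₂ : c₂.IsCycle)
    (hdisj : ∀ u ∈ c₁.support, u ∉ c₂.support)
    (u w : V) (huC : u ∈ c₂.support) (hwC : w ∈ c₂.support) (huw : u ≠ w)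
    (hu : 5 ≤ {s | s ∈ c₁.support ∧ G.Adj u s}.ncard)
    (hw : 3 ≤ {s | s ∈ c₁.support ∧ G.Adj w s}.ncard) :
    ∃ (a b : ↥({s | s ∈ c₁.support} ∪ {s | s ∈ c₂.support}))
      (d₁ : (G.induce ({s | s ∈ c₁.support} ∪ {s | s ∈ c₂.support})).Walk a a)
      (d₂ : (G.induce ({s | s ∈ c₁.support} ∪ {s | s ∈ c₂.support})).Walk b b),
      d₁.IsCycle ∧ d₂.IsCycle ∧
      (∀ u, u ∈ d₁.support → u ∉ d₂.support) ∧
      d₁.length + d₂.length < c₁.length + c₂.length := by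
  classical
  obtain ⟨p, ⟨hp, hup⟩, q, ⟨hq, huq⟩, hpq, hw3⟩ := Set.exists_ne_two_lt_ncard_diff hu hw
  have hcycles := hc₁.hasDisjointCyclesIn hp hq hpq (fun h => hdisj u h huC)
    (fun h => hdisj w h hwC) huw hup huq hw3 (Or.inr huC) (Or.inr hwC) (fun x hx => Or.inl hx)
  exact hcycles.exists_induce (by have := hc₂.three_le_length; omega)

/-- Lemma 8(i): if `C₂` (of length at least 6) has vertices with degree sequence `(5, 3)` to `C₁`, then `G[V(C₁) ∪ V(C₂)]` has two disjoint cycles of smaller total length. -/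
theorem shorter_two_cycles_14 {V : Type*} [Fintype V] [DecidableEq V]
    (G : SimpleGraph V)
    (v₁ v₂ : V) (c₁ : G.Walk v₁ v₁) (c₂ : G.Walk v₂ v₂)
    (hc₁ : c₁.IsCycle) (hc₂ : c₂.IsCycle)
    (hdisj : ∀ u ∈ c₁.support, u ∉ c₂.support)
    (hlen : 6 ≤ c₂.length)
    (u w : V) (huC : u ∈ c₂.support) (hwC : w ∈ c₂.support) (huw : u ≠ w)
    (hu : 5 ≤ {s | s ∈ c₁.support ∧ G.Adj u s}.ncard)
    (hw : 3 ≤ {s | s ∈ c₁.support ∧ G.Adj w s}.ncard) :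
    ∃ (a b : ↥({s | s ∈ c₁.support} ∪ {s | s ∈ c₂.support}))
      (d₁ : (G.induce ({s | s ∈ c₁.support} ∪ {s | s ∈ c₂.support})).Walk a a)
      (d₂ : (G.induce ({s | s ∈ c₁.support} ∪ {s | s ∈ c₂.support})).Walk b b),
      d₁.IsCycle ∧ d₂.IsCycle ∧
      (∀ u, u ∈ d₁.support → u ∉ d₂.support) ∧
      d₁.length + d₂.length < c₁.length + c₂.length :=
  shorter_two_cycles_14_general G v₁ v₂ c₁ c₂ hc₁ hc₂ hdisj u w huC hwC huw hu hw
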